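/- Let 0 < c† < 1/Q and δ' > δ ≥ 0 with corresponding thresholds c† < c†_new < 1/Q. Then the equilibrium hashrates H = (Q^δ/c†)^{1/(δ+1)} and H' = (Q^{δ'}/c†_new)^{1/(δ'+1)} satisfy H ≥ H'. -/

import Mathlib

/-!
Writing `Q ^ δ / c = Q ^ (δ + 1) * (Q * c)⁻¹` gives `H = Q * (Q * c)⁻¹ ^ (1 / (δ + 1))`.
Below the threshold the base `(Q * c)⁻¹` is at least `1`, so this power decreases as the
exponent `1 / (δ + 1)` shrinks and as `c` grows; both changes only lower the hashrate.
-/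

open Real

lemma Real.rpow_le_rpow_of_one_le {x y p q : ℝ} (hx : 1 ≤ x) (hxy : x ≤ y) (hp : 0 ≤ p)
    (hpq : p ≤ q) : x ^ p ≤ y ^ q :=
  calc x ^ p ≤ x ^ q := rpow_le_rpow_of_exponent_le hx hpq
    _ ≤ y ^ q := rpow_le_rpow (by linarith) hxy (hp.trans hpq)

/-- `c` stands for the participation threshold `c†`. -/
noncomputable def equilibriumHashrate (Q δ c : ℝ) : ℝ :=
  (Q ^ δ / c) ^ ((1 : ℝ) / (δ + 1))

section

variable {Q δ δ' c c' : ℝ}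

lemma equilibriumHashrate_eq_mul (hQ : 0 < Q) (hc : 0 ≤ c) (hδ : δ + 1 ≠ 0) :
    equilibriumHashrate Q δ c = Q * (Q * c)⁻¹ ^ ((1 : ℝ) / (δ + 1)) := by
  have hsplit : Q ^ δ / c = Q ^ (δ + 1) * (Q * c)⁻¹ := by
    rw [rpow_add_one hQ.ne', mul_inv, div_eq_mul_inv]
    field_simp
  rw [equilibriumHashrate, hsplit, mul_rpow (by positivity) (by positivity),
    ← rpow_mul hQ.le, mul_one_div_cancel hδ, rpow_one]

lemma equilibriumHashrate_le_equilibriumHashrate (hQ : 0 < Q) (hδ : 0 < δ + 1)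
    (hδδ' : δ ≤ δ') (hc : 0 < c) (hcc' : c ≤ c') (hc'Q : Q * c' ≤ 1) :
    equilibriumHashrate Q δ' c' ≤ equilibriumHashrate Q δ c := by
  have hδ' : 0 < δ' + 1 := by linarith
  have hc' : 0 < c' := hc.trans_le hcc'
  rw [equilibriumHashrate_eq_mul hQ hc'.le hδ'.ne',
    equilibriumHashrate_eq_mul hQ hc.le hδ.ne']
  gcongr
  exact rpow_le_rpow_of_one_le (one_le_inv₀ (by positivity) |>.mpr hc'Q) (by gcongr)
    (by positivity) (by gcongr)

end

theorem hashrate_monotone_in_delta_general (Q δ δ' cdag cdagNew : ℝ) (hQ : 0 < Q)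
    (hδ : 0 ≤ δ) (hδδ' : δ < δ') (hcdag0 : 0 < cdag) (hcc : cdag < cdagNew)
    (hcdagNewQ : cdagNew < 1 / Q) :
    (Q ^ δ' / cdagNew) ^ ((1 : ℝ) / (δ' + 1))
      ≤ (Q ^ δ / cdag) ^ ((1 : ℝ) / (δ + 1)) := by
  have hQcdagNew : Q * cdagNew ≤ 1 := by
    rw [lt_div_iff₀ hQ, mul_comm] at hcdagNewQ
    exact hcdagNewQ.le
  exact equilibriumHashrate_le_equilibriumHashrate hQ (by linarith) hδδ'.le hcdag0 hcc.le
    hQcdagNew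

/-- For `0 < c† < 1/Q`, `0 ≤ δ < δ'` and thresholds `c† < c†_new < 1/Q`, the
equilibrium hashrates `H = (Q^δ/c†)^(1/(δ+1))` and
`H' = (Q^{δ'}/c†_new)^(1/(δ'+1))` satisfy `H ≥ H'`. -/
theorem hashrate_monotone_in_delta (Q δ δ' cdag cdagNew : ℝ) (hQ : 0 < Q)
    (hδ : 0 ≤ δ) (hδδ' : δ < δ') (hcdag0 : 0 < cdag) (hcc : cdag < cdagNew)
    (hcdagQ : cdag < 1 / Q) (hcdagNewQ : cdagNew < 1 / Q) :
    (Q ^ δ' / cdagNew) ^ ((1 : ℝ) / (δ' + 1))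
      ≤ (Q ^ δ / cdag) ^ ((1 : ℝ) / (δ + 1)) :=
  hashrate_monotone_in_delta_general Q δ δ' cdag cdagNew hQ hδ hδδ' hcdag0 hcc hcdagNewQ
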